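/- arXiv:2404.14179 — 7 statements merged into one kernel-verified Lean document; each statement's English description precedes it below -/
import Mathlib

section
/- Let m be a positive integer and i an integer with gcd(i+2,m) = 1. If d is a positive divisor of m with d < m, then there is no integer ℓ with 1 ≤ ℓ ≤ m−1 such that d = −⌊ℓi/m⌋·m + ℓ(i+2). -/
theorem stmt_1 (m i : ℤ) (hm : 0 < m) (hgcd : Int.gcd (i + 2) m = 1)
    (d : ℤ) (hd : 0 < d) (hdvd : d ∣ m) (hdm : d < m) :
    ¬ ∃ ℓ : ℤ, 1 ≤ ℓ ∧ ℓ ≤ m - 1 ∧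
      d = -⌊((ℓ : ℚ) * (i : ℚ)) / (m : ℚ)⌋ * m + ℓ * (i + 2) := by
  rintro ⟨ℓ, hℓ1, hℓ2, heq⟩
  have hmnat : ((m.toNat : ℤ)) = m := Int.toNat_of_nonneg hm.le
  have hfloor : ⌊((ℓ : ℚ) * (i : ℚ)) / (m : ℚ)⌋ = (ℓ * i) / m := by
    rw [← hmnat]
    push_cast
    rw [← Int.cast_mul]
    exact Rat.floor_intCast_div_natCast (ℓ * i) m.toNat
  rw [hfloor] at heq
  have hmod_nonneg : 0 ≤ (ℓ * i) % m := Int.emod_nonneg _ hm.ne'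
  have hemod : (ℓ * i) % m = ℓ * i - m * ((ℓ * i) / m) := by
    have := Int.emod_add_mul_ediv (ℓ * i) m; linarith
  have hkey : d = (ℓ * i) % m + 2 * ℓ := by rw [hemod]; linarith [heq]
  -- d ∣ ℓ * (i + 2)
  have hdvdℓi2 : d ∣ ℓ * (i + 2) := by
    have : ℓ * (i + 2) = d + ((ℓ * i) / m) * m := by linarith [heq]
    rw [this]
    exact dvd_add (dvd_refl d) (Dvd.dvd.mul_left hdvd _)
  have hcop : IsCoprime (i + 2) m := Int.isCoprime_iff_gcd_eq_one.mpr hgcd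
  have hcopd : IsCoprime (i + 2) d := hcop.of_isCoprime_of_dvd_right hdvd
  have hdvdℓ : d ∣ ℓ := hcopd.symm.dvd_of_dvd_mul_right hdvdℓi2
  have hdℓ : d ≤ ℓ := Int.le_of_dvd (by linarith) hdvdℓ
  linarith
end

section
/- Let m be a positive integer and i an integer with gcd(i,m) = gcd(i+2,m) = 1, and let S be the numerical semigroup generated by m together with the numbers −⌊ℓi/m⌋·m + ℓ(i+2) for 1 ≤ ℓ ≤ m−1. Then every positive divisor d of m with d < m does not belong to S. -/
/-!
Let `j` be an inverse of `i + 2` modulo `m` and weigh `x ∈ ℤ` by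
`F x = 2 (x j mod m) + (x j i mod m)`. Then `F` is subadditive, `F m = 0`, and `F` fixes each
generator `2 ℓ + (ℓ i mod m)` (as its `j`-multiple is `ℓ` mod `m`), so `F x ≤ x` on the semigroup.
Moreover `F x ≡ x (mod m)`. For a divisor `0 < d < m` lying in the semigroup this forces
`F d = d`; but `d` divides `ℓ = d j mod m`, and `ℓ ≠ 0`, so `F d ≥ 2 ℓ ≥ 2 d > d`.
-/

theorem Int.emod_add_le_add_emod (a b : ℤ) {m : ℤ} (hm : 0 < m) :
    (a + b) % m ≤ a % m + b % m := by
  have hc : 0 ≤ a % m + b % m := add_nonneg (emod_nonneg a hm.ne') (emod_nonneg b hm.ne')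
  rw [add_emod, emod_def (a % m + b % m)]
  exact sub_le_self _ (mul_nonneg hm.le (ediv_nonneg hc hm.le))

theorem AddSubmonoid.apply_le_self_of_mem_closure {M : Type*} [AddCommMonoid M] [PartialOrder M]
    [IsOrderedAddMonoid M] {s : Set M} {F : M → M} (hzero : F 0 ≤ 0)
    (hadd : ∀ x y, F (x + y) ≤ F x + F y) (hs : ∀ x ∈ s, F x ≤ x) {x : M}
    (hx : x ∈ closure s) : F x ≤ x := by
  induction hx using closure_induction with
  | mem x hx => exact hs x hx
  | zero => exact hzero
  | add x y _ _ hx hy => exact (hadd x y).trans (add_le_add hx hy)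

theorem neg_floor_div_mul_add_eq_two_mul_add_emod {m : ℤ} (hm : 0 ≤ m) (i ℓ : ℤ) :
    -⌊((ℓ : ℚ) * (i : ℚ)) / (m : ℚ)⌋ * m + ℓ * (i + 2) = 2 * ℓ + ℓ * i % m := by
  have hfloor : ⌊((ℓ : ℚ) * (i : ℚ)) / (m : ℚ)⌋ = ℓ * i / m := by
    rw [Int.floor_div_cast_of_nonneg hm, ← Int.cast_mul, Int.floor_intCast]
  rw [hfloor, Int.emod_def]
  ring

def residueWeight (m i j x : ℤ) : ℤ := 2 * (x * j % m) + x * j * i % m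

section residueWeight

variable {m i j : ℤ}

@[simp]
theorem residueWeight_zero : residueWeight m i j 0 = 0 := by
  simp [residueWeight]

@[simp]
theorem residueWeight_self : residueWeight m i j m = 0 := by
  simp [residueWeight, mul_assoc]

theorem residueWeight_add_le (hm : 0 < m) (x y : ℤ) :
    residueWeight m i j (x + y) ≤ residueWeight m i j x + residueWeight m i j y := by
  have h₁ := Int.emod_add_le_add_emod (x * j) (y * j) hm
  have h₂ := Int.emod_add_le_add_emod (x * j * i) (y * j * i) hm
  simp only [residueWeight, add_mul] at *
  omega

theorem residueWeight_nonneg (hm : 0 < m) (x : ℤ) : 0 ≤ residueWeight m i j x :=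
  add_nonneg (mul_nonneg zero_le_two (Int.emod_nonneg _ hm.ne')) (Int.emod_nonneg _ hm.ne')

theorem residueWeight_modEq (hj : (i + 2) * j ≡ 1 [ZMOD m]) (x : ℤ) :
    residueWeight m i j x ≡ x [ZMOD m] :=
  calc residueWeight m i j x
      ≡ 2 * (x * j) + x * j * i [ZMOD m] :=
        ((Int.mod_modEq _ _).mul_left 2).add (Int.mod_modEq _ _)
    _ = x * ((i + 2) * j) := by ring
    _ ≡ x * 1 [ZMOD m] := hj.mul_left x
    _ = x := mul_one x

theorem residueWeight_generator (hj : (i + 2) * j ≡ 1 [ZMOD m]) {ℓ : ℤ} (hℓ₀ : 0 ≤ ℓ)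
    (hℓm : ℓ < m) : residueWeight m i j (2 * ℓ + ℓ * i % m) = 2 * ℓ + ℓ * i % m := by
  have hℓ : (2 * ℓ + ℓ * i % m) * j ≡ ℓ [ZMOD m] :=
    calc (2 * ℓ + ℓ * i % m) * j
        ≡ (2 * ℓ + ℓ * i) * j [ZMOD m] := (((Int.mod_modEq _ _).add_left _).mul_right _)
      _ = ℓ * ((i + 2) * j) := by ring
      _ ≡ ℓ * 1 [ZMOD m] := hj.mul_left ℓ
      _ = ℓ := mul_one ℓ
  rw [residueWeight, hℓ, hℓ.mul_right i, Int.emod_eq_of_lt hℓ₀ hℓm]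

theorem lt_residueWeight_of_dvd (hm : 0 < m) {d : ℤ} (hd : 0 < d) (hdm : d ∣ m)
    (hne : residueWeight m i j d ≠ 0) : d < residueWeight m i j d := by
  have hℓ₀ : 0 ≤ d * j % m := Int.emod_nonneg _ hm.ne'
  have hdℓ : d ∣ d * j % m := (EuclideanDomain.dvd_mod_iff hdm).mpr (dvd_mul_right d j)
  have hℓ : d * j % m ≠ 0 := by
    intro hℓ
    apply hne
    rw [residueWeight, hℓ, Int.mul_emod, hℓ]
    simp
  have := Int.le_of_dvd (lt_of_le_of_ne hℓ₀ (Ne.symm hℓ)) hdℓ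
  have := Int.emod_nonneg (d * j * i) hm.ne'
  unfold residueWeight
  omega

end residueWeight

theorem stmt_2_general (m i : ℤ) (hm : 0 < m)
    (h2 : Int.gcd (i + 2) m = 1) :
    ∀ d : ℤ, 0 < d → d ∣ m → d < m →
      d ∉ AddSubmonoid.closure
        ({m} ∪ {x : ℤ | ∃ ℓ : ℤ, 1 ≤ ℓ ∧ ℓ ≤ m - 1 ∧
          x = -⌊((ℓ : ℚ) * (i : ℚ)) / (m : ℚ)⌋ * m + ℓ * (i + 2)}) := by
  intro d hd hdm hdlt hmem
  obtain ⟨j, hj⟩ : ∃ j, (i + 2) * j ≡ 1 [ZMOD m] := by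
    obtain ⟨u, v, huv⟩ := Int.isCoprime_iff_gcd_eq_one.mpr h2
    exact ⟨u, Int.modEq_iff_dvd.mpr ⟨v, by linear_combination -huv⟩⟩
  have hle : residueWeight m i j d ≤ d := by
    refine AddSubmonoid.apply_le_self_of_mem_closure residueWeight_zero.le
      (residueWeight_add_le hm) ?_ hmem
    rintro x (rfl | ⟨ℓ, hℓ₁, hℓm, rfl⟩)
    · simpa using hm.le
    · rw [neg_floor_div_mul_add_eq_two_mul_add_emod hm.le, residueWeight_generator hj (by omega) (by omega)]
  have heq : residueWeight m i j d = d := by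
    have h := residueWeight_modEq hj d
    rwa [Int.ModEq, Int.emod_eq_of_lt (residueWeight_nonneg hm d) (hle.trans_lt hdlt),
      Int.emod_eq_of_lt hd.le hdlt] at h
  exact (lt_residueWeight_of_dvd hm hd hdm (by rw [heq]; exact hd.ne')).ne' heq

theorem stmt_2 (m i : ℤ) (hm : 0 < m)
    (h1 : Int.gcd i m = 1) (h2 : Int.gcd (i + 2) m = 1) :
    ∀ d : ℤ, 0 < d → d ∣ m → d < m →
      d ∉ AddSubmonoid.closure
        ({m} ∪ {x : ℤ | ∃ ℓ : ℤ, 1 ≤ ℓ ∧ ℓ ≤ m - 1 ∧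
          x = -⌊((ℓ : ℚ) * (i : ℚ)) / (m : ℚ)⌋ * m + ℓ * (i + 2)}) :=
  stmt_2_general m i hm h2
end

section
/- Let m ≥ 3 and i be integers with gcd(i,m) = gcd(i+2,m) = 1. For every integer ℓ with 0 < ℓ ≤ ⌊(m+1)/2⌋ there exists an integer k satisfying i(m−ℓ)/m ≤ k ≤ (i+2)(m−ℓ)/m, i.e., i(m−ℓ) ≤ km ≤ (i+2)(m−ℓ). -/
theorem stmt_3 (m i ℓ : ℤ) (hm : 3 ≤ m)
    (h1 : Int.gcd i m = 1) (h2 : Int.gcd (i + 2) m = 1)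
    (hℓ1 : 0 < ℓ) (hℓ2 : ℓ ≤ (m + 1) / 2) :
    ∃ k : ℤ, i * (m - ℓ) ≤ k * m ∧ k * m ≤ (i + 2) * (m - ℓ) := by
  have hm0 : (0:ℤ) < m := by omega
  have hml : ℓ < m := by omega
  have h2l : 2 * ℓ ≤ m + 1 := by omega
  have hcop : IsCoprime i m := Int.isCoprime_iff_gcd_eq_one.mpr h1
  have hnd : ¬ m ∣ i * (m - ℓ) := by
    intro h
    have hml' : m ∣ (m - ℓ) := hcop.symm.dvd_of_dvd_mul_left h
    have hdl : m ∣ ℓ := by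
      have := dvd_sub (dvd_refl m) hml'
      simpa using this
    have := Int.le_of_dvd hℓ1 hdl
    omega
  set A := i * (m - ℓ) with hA
  have hdm := Int.mul_ediv_add_emod A m
  have hr1 : 0 ≤ A % m := Int.emod_nonneg _ (by omega)
  have hr2 : A % m < m := Int.emod_lt_of_pos _ hm0
  have hr0 : A % m ≠ 0 := fun h => hnd (Int.dvd_of_emod_eq_zero h)
  have hr0' : 1 ≤ A % m := lt_of_le_of_ne hr1 (Ne.symm hr0)
  refine ⟨A / m + 1, ?_, ?_⟩
  · nlinarith [hdm]
  · have : (i + 2) * (m - ℓ) = A + 2 * (m - ℓ) := by ring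
    rw [this]
    nlinarith [hdm, hr0']
end

section
/- Let m ≥ 19 and i be integers with gcd(i,m) = gcd(i+2,m) = 1 and 2 < i < ⌊(m−3)/2⌋. Then m − ⌊m/(i+2)⌋·i ≤ (m+1)/2. -/
theorem stmt_4 (m i : ℤ) (hm : 19 ≤ m)
    (h1 : Int.gcd i m = 1) (h2 : Int.gcd (i + 2) m = 1)
    (hi1 : 2 < i) (hi2 : i < (m - 3) / 2) :
    (m : ℚ) - (⌊(m : ℚ) / ((i : ℚ) + 2)⌋ : ℚ) * (i : ℚ) ≤ ((m : ℚ) + 1) / 2 := by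
  have hipos : (0:ℤ) < i + 2 := by omega
  have hfloor : ⌊(m : ℚ) / ((i : ℚ) + 2)⌋ = m / (i + 2) := by
    have h := Rat.floor_intCast_div_natCast m (i+2).toNat
    have ht : ((i+2).toNat : ℤ) = i + 2 := Int.toNat_of_nonneg (le_of_lt hipos)
    rw [show ((i:ℚ) + 2) = (((i+2).toNat : ℤ) : ℚ) by push_cast [ht]; ring] at *
    rw [show ((((i+2).toNat : ℤ)) : ℚ) = (((i+2).toNat : ℕ) : ℚ) by push_cast; ring]
    rw [h, ht]
  rw [hfloor]
  set q := m / (i + 2) with hq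
  have hmr := Int.mul_ediv_add_emod m (i + 2)
  have hr0 : 0 ≤ m % (i + 2) := Int.emod_nonneg m (by omega)
  have hr1 : m % (i + 2) < i + 2 := Int.emod_lt_of_pos m hipos
  -- q ≥ 2
  have h2i : 2 * (i + 2) ≤ m := by
    have := Int.ediv_mul_le (m - 3) (show (2:ℤ) ≠ 0 by norm_num)
    have h2 : 2 * ((m-3)/2) ≤ m - 3 := by
      have := Int.mul_ediv_add_emod (m-3) 2
      have := Int.emod_nonneg (m-3) (show (2:ℤ) ≠ 0 by norm_num)
      omega
    omega
  have hq2 : 2 ≤ q := by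
    rw [hq, Int.le_ediv_iff_mul_le hipos]; linarith
  have key : 2 * (m - q * i) ≤ m + 1 := by
    rcases eq_or_lt_of_le (show 3 ≤ i by omega) with h3 | h4
    · -- i = 3, q ≥ 3
      have hq3 : 3 ≤ q := by
        rw [hq, Int.le_ediv_iff_mul_le hipos]; omega
      nlinarith [hr1, hr0, hmr]
    · nlinarith [mul_nonneg (sub_nonneg.2 hq2) (show (0:ℤ) ≤ i - 2 by omega), hr1, hmr]
  have : ((2 * (m - q * i) : ℤ) : ℚ) ≤ ((m + 1 : ℤ) : ℚ) := by exact_mod_cast key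
  push_cast at this
  linarith
end

section
/- Let m ≥ 2 and i be integers with gcd(i,m) = gcd(i+2,m) = 1. The number of lattice points (k,ℓ) ∈ ℤ² lying strictly inside the triangle with vertices (i,0), (i+2,0), and (0,m) is exactly m−1. -/
/-!
Writing `t = m - ℓ` for `0 < t < m`, row `ℓ` of the triangle holds the integers `k` with
`i t < m k < (i + 2) t`. As `m ∤ (i + 2) t`, there are `⌊(i + 2) t / m⌋ - ⌊i t / m⌋` of them.
Now `m ⌊j t / m⌋ = j t - (j t mod m)`, and for `j` coprime to `m` the residues `j t mod m`
run once through `0 < t < m`, so they cancel between `j = i + 2` and `j = i`: `m` times the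
number of points is `∑ 2 t = m (m - 1)`.
-/

open Finset

def halfPlane (u v c : ℝ) : Set (ℝ × ℝ) := {p | u * p.1 + v * p.2 ≤ c}

lemma convex_halfPlane (u v c : ℝ) : Convex ℝ (halfPlane u v c) :=
  convex_halfSpace_le ⟨fun p q => by simp only [Prod.fst_add, Prod.snd_add]; ring,
    fun r p => by simp only [Prod.smul_fst, Prod.smul_snd, smul_eq_mul]; ring⟩ c

lemma interior_halfPlane {u v : ℝ} (huv : u ≠ 0 ∨ v ≠ 0) (c : ℝ) :
    interior (halfPlane u v c) = {p | u * p.1 + v * p.2 < c} := by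
  let f : ℝ × ℝ →L[ℝ] ℝ := u • ContinuousLinearMap.fst ℝ ℝ ℝ + v • ContinuousLinearMap.snd ℝ ℝ ℝ
  have hf : ∀ p, f p = u * p.1 + v * p.2 := fun p => rfl
  have hsurj : Function.Surjective f := by
    intro r
    rcases huv with hu | hv
    · exact ⟨(r / u, 0), by simp [hf, mul_div_cancel₀ r hu]⟩
    · exact ⟨(0, r / v), by simp [hf, mul_div_cancel₀ r hv]⟩
  have : halfPlane u v c = f ⁻¹' Set.Iic c := by ext p; simp [halfPlane, hf]
  rw [this, f.interior_preimage hsurj, interior_Iic]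
  ext p; simp [hf]

section Triangle

variable {a b h : ℝ}

lemma convexHull_triangle (hab : a < b) (hh : 0 < h) :
    convexHull ℝ {(a, 0), (b, 0), (0, h)} =
      halfPlane 0 (-1) 0 ∩ halfPlane (-h) (-a) (-(a * h)) ∩ halfPlane h b (b * h) := by
  apply subset_antisymm
  · refine convexHull_min ?_ (((convex_halfPlane ..).inter (convex_halfPlane ..)).inter
      (convex_halfPlane ..))
    simp only [Set.insert_subset_iff, Set.singleton_subset_iff, Set.mem_inter_iff, halfPlane,
      Set.mem_ofPred_eq]
    refine ⟨⟨⟨?_, ?_⟩, ?_⟩, ⟨⟨?_, ?_⟩, ?_⟩, ⟨⟨?_, ?_⟩, ?_⟩⟩ <;> nlinarith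
  · rintro ⟨x, y⟩ ⟨⟨hy, hl⟩, hr⟩
    simp only [halfPlane, Set.mem_ofPred_eq] at hy hl hr
    -- barycentric coordinates of `(x, y)`
    set α := (b * (h - y) - h * x) / ((b - a) * h)
    set β := (h * x - a * (h - y)) / ((b - a) * h)
    set γ := y / h
    have hba : b - a ≠ 0 := by linarith
    have hh0 : h ≠ 0 := hh.ne'
    have hsum : ∑ j : Fin 3, ![α, β, γ] j • ![(a, 0), (b, 0), (0, h)] j = (x, y) := by
      simp only [Fin.sum_univ_three, Matrix.cons_val, Prod.smul_mk, smul_eq_mul, Prod.mk_add_mk,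
        mul_zero, add_zero, zero_add, Prod.mk.injEq, α, β, γ]
      constructor
      · field_simp
        ring
      · field_simp
    rw [← hsum]
    refine (convex_convexHull ℝ _).sum_mem (fun j _ => ?_) ?_ (fun j _ => ?_)
    · fin_cases j <;> simp only [α, β, γ] <;> apply div_nonneg <;> nlinarith
    · simp only [Fin.sum_univ_three, Matrix.cons_val, α, β, γ]
      field_simp
      ring
    · fin_cases j <;> exact subset_convexHull ℝ _ (by simp)

lemma mem_interior_convexHull_triangle (hab : a < b) (hh : 0 < h) (x y : ℝ) :
    (x, y) ∈ interior (convexHull ℝ {(a, 0), (b, 0), (0, h)}) ↔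
      0 < y ∧ a * (h - y) < h * x ∧ h * x < b * (h - y) := by
  rw [convexHull_triangle hab hh, interior_inter, interior_inter,
    interior_halfPlane (by simp), interior_halfPlane (by simp [hh.ne']),
    interior_halfPlane (by simp [hh.ne'])]
  simp only [Set.mem_inter_iff, Set.mem_ofPred_eq]
  constructor
  · rintro ⟨⟨h₁, h₂⟩, h₃⟩
    exact ⟨by linarith, by linarith, by linarith⟩
  · rintro ⟨h₁, h₂, h₃⟩
    exact ⟨⟨by linarith, by linarith⟩, by linarith⟩

end Triangle

namespace Int

lemma sum_Ioo_reflect {M : Type*} [AddCommMonoid M] (f : ℤ → M) (m : ℤ) :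
    ∑ t ∈ Ioo 0 m, f (m - t) = ∑ t ∈ Ioo 0 m, f t :=
  sum_nbij' (m - ·) (m - ·) (by intro t; simp only [mem_Ioo]; omega)
    (by intro t; simp only [mem_Ioo]; omega) (by simp) (by simp) (by simp)

lemma two_mul_sum_Ioo {m : ℤ} (hm : 0 < m) : 2 * ∑ t ∈ Ioo 0 m, t = m * (m - 1) := by
  have hcard : (#(Ioo 0 m) : ℤ) = m - 1 := by
    rw [card_Ioo, sub_zero, toNat_of_nonneg (by omega : 0 ≤ m - 1)]
  calc 2 * ∑ t ∈ Ioo 0 m, t = ∑ t ∈ Ioo 0 m, (m - t) + ∑ t ∈ Ioo 0 m, t := by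
        rw [two_mul, sum_Ioo_reflect (fun t => t)]
    _ = m * (m - 1) := by
        rw [← sum_add_distrib, sum_congr rfl fun t _ => sub_add_cancel m t, sum_const,
          nsmul_eq_mul, hcard, mul_comm]

lemma not_dvd_mul_of_isCoprime {m j t : ℤ} (hj : IsCoprime j m) (ht : 0 < t) (htm : t < m) :
    ¬ m ∣ j * t := fun h => by
  have := le_of_dvd ht (hj.symm.dvd_of_dvd_mul_left h)
  omega

lemma sum_mul_emod_Ioo {m j : ℤ} (hj : IsCoprime j m) :
    ∑ t ∈ Ioo 0 m, j * t % m = ∑ t ∈ Ioo 0 m, t := by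
  have hmaps : Set.MapsTo (fun t => j * t % m) (Ioo 0 m) (Ioo 0 m) := by
    intro t ht
    simp only [coe_Ioo, Set.mem_Ioo] at ht ⊢
    have hne : j * t % m ≠ 0 := fun h0 =>
      not_dvd_mul_of_isCoprime hj ht.1 ht.2 (dvd_of_emod_eq_zero h0)
    have := emod_nonneg (j * t) (by omega : m ≠ 0)
    have := emod_lt_of_pos (j * t) (by omega : 0 < m)
    omega
  have hinj : Set.InjOn (fun t => j * t % m) (Ioo 0 m) := by
    intro t ht t' ht' heq
    simp only [coe_Ioo, Set.mem_Ioo] at ht ht'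
    have : m ∣ j * (t' - t) := by rw [mul_sub]; exact ModEq.dvd heq
    have := eq_zero_of_abs_lt_dvd (hj.symm.dvd_of_dvd_mul_left this) (by rw [abs_lt]; omega)
    omega
  exact sum_nbij _ (fun t ht => hmaps ht) hinj
    (surjOn_of_injOn_of_card_le _ hmaps hinj le_rfl) fun _ _ => rfl

lemma mul_sum_mul_ediv_Ioo {m j : ℤ} (hj : IsCoprime j m) :
    m * ∑ t ∈ Ioo 0 m, j * t / m = (j - 1) * ∑ t ∈ Ioo 0 m, t := by
  calc m * ∑ t ∈ Ioo 0 m, j * t / m = ∑ t ∈ Ioo 0 m, (j * t - j * t % m) := by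
        rw [mul_sum]
        exact sum_congr rfl fun t _ => by rw [emod_def]; ring
    _ = (j - 1) * ∑ t ∈ Ioo 0 m, t := by
        rw [sum_sub_distrib, sum_mul_emod_Ioo hj, ← mul_sum]
        ring

lemma sum_Ioo_ediv_sub_ediv {m i : ℤ} (hm : 0 < m) (hi : IsCoprime i m)
    (hi2 : IsCoprime (i + 2) m) :
    ∑ t ∈ Ioo 0 m, ((i + 2) * t / m - i * t / m) = m - 1 := by
  refine mul_left_cancel₀ hm.ne' ?_
  rw [sum_sub_distrib, mul_sub, mul_sum_mul_ediv_Ioo hi, mul_sum_mul_ediv_Ioo hi2,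
    ← two_mul_sum_Ioo hm]
  ring

lemma mem_Ioc_ediv_iff {m a b k : ℤ} (hm : 0 < m) (hb : ¬ m ∣ b) :
    k ∈ Ioc (a / m) (b / m) ↔ a < m * k ∧ m * k < b := by
  rw [mem_Ioc, Int.ediv_lt_iff_lt_mul hm, Int.le_ediv_iff_mul_le hm, mul_comm k m]
  refine and_congr_right fun _ => ⟨fun h => lt_of_le_of_ne h ?_, le_of_lt⟩
  rintro rfl
  exact hb (dvd_mul_right m k)

end Int

lemma ncard_setOf_lt_mul_lt {m : ℤ} (hm : 0 < m) (s : Finset ℤ) {p q : ℤ → ℤ}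
    (hpq : ∀ l ∈ s, p l ≤ q l) (hq : ∀ l ∈ s, ¬ m ∣ q l) :
    ({x : ℤ × ℤ | x.2 ∈ s ∧ p x.2 < m * x.1 ∧ m * x.1 < q x.2}.ncard : ℤ) =
      ∑ l ∈ s, (q l / m - p l / m) := by
  let e : (Σ _ : ℤ, ℤ) ≃ ℤ × ℤ := (Equiv.sigmaEquivProd ℤ ℤ).trans (Equiv.prodComm ℤ ℤ)
  have hset : {x : ℤ × ℤ | x.2 ∈ s ∧ p x.2 < m * x.1 ∧ m * x.1 < q x.2} =
      ↑((s.sigma fun l => Ioc (p l / m) (q l / m)).map e.toEmbedding) := by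
    ext ⟨k, l⟩
    simp only [Set.mem_ofPred_eq, mem_coe, mem_map_equiv, mem_sigma]
    change _ ↔ l ∈ s ∧ k ∈ Ioc (p l / m) (q l / m)
    exact and_congr_right fun hl => (Int.mem_Ioc_ediv_iff hm (hq l hl)).symm
  rw [hset, Set.ncard_coe_finset, card_map, card_sigma, Nat.cast_sum]
  refine sum_congr rfl fun l hl => ?_
  rw [Int.card_Ioc, Int.toNat_of_nonneg (sub_nonneg.2 (Int.ediv_le_ediv hm (hpq l hl)))]

theorem stmt_9 (m i : ℤ) (hm : 2 ≤ m)
    (h1 : Int.gcd i m = 1) (h2 : Int.gcd (i + 2) m = 1) :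
    (Set.ncard {p : ℤ × ℤ |
        ((p.1 : ℝ), (p.2 : ℝ)) ∈ interior (convexHull ℝ
          ({((i : ℝ), (0 : ℝ)), ((i : ℝ) + 2, (0 : ℝ)), ((0 : ℝ), (m : ℝ))} : Set (ℝ × ℝ)))}
      : ℤ) = m - 1 := by
  have hm0 : 0 < m := by omega
  have hi := Int.isCoprime_iff_gcd_eq_one.mpr h1
  have hi2 := Int.isCoprime_iff_gcd_eq_one.mpr h2
  have hcount := ncard_setOf_lt_mul_lt hm0 (Ioo 0 m)
    (p := fun l => i * (m - l)) (q := fun l => (i + 2) * (m - l))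
    (fun l hl => by rw [mem_Ioo] at hl; nlinarith)
    (fun l hl => by
      rw [mem_Ioo] at hl
      exact Int.not_dvd_mul_of_isCoprime hi2 (by omega) (by omega))
  rw [Int.sum_Ioo_reflect (fun t => (i + 2) * t / m - i * t / m) m,
    Int.sum_Ioo_ediv_sub_ediv hm0 hi hi2] at hcount
  rw [← hcount]
  congr 2
  ext ⟨k, l⟩
  rw [Set.mem_ofPred_eq, Set.mem_ofPred_eq,
    mem_interior_convexHull_triangle (by linarith) (by exact_mod_cast hm0), mem_Ioo]
  norm_cast
  exact ⟨fun ⟨hl, hlo, hhi⟩ => ⟨⟨hl, by linarith⟩, hlo, hhi⟩,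
    fun ⟨⟨hl, _⟩, hlo, hhi⟩ => ⟨hl, hlo, hhi⟩⟩
end

section
/- Let q be an odd prime power and m = (q+1)/2. In the function field F = F_{q²}(x,y) with y^m = x^{m−1}(x²+1), set x̃ = (y+2x)/(2(y−2x)) and ỹ = (x^{m+1} − x^{m−1})/(y−2x)^m. Then ỹ² = x̃^q + x̃. -/
theorem stmt_15 (p k q m : ℕ) (hp : p.Prime) (hpodd : Odd p) (hk : 0 < k)
    (hq : q = p ^ k) (hm : 2 * m = q + 1)
    (F : Type) [Field F] [CharP F p]
    (x y : F) (hx : x ≠ 0) (hy : y - 2 * x ≠ 0)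
    (heq : y ^ m = x ^ (m - 1) * (x ^ 2 + 1)) :
    ((x ^ (m + 1) - x ^ (m - 1)) / (y - 2 * x) ^ m) ^ 2
      = ((y + 2 * x) / (2 * (y - 2 * x))) ^ q + (y + 2 * x) / (2 * (y - 2 * x)) := by
  haveI : Fact p.Prime := ⟨hp⟩
  have hp2 : p ≠ 2 := by
    rintro rfl
    exact (by norm_num : ¬ Odd 2) hpodd
  have h2 : (2 : F) ≠ 0 := by
    intro h
    have hdvd : p ∣ 2 := (CharP.cast_eq_zero_iff F p 2).mp (by exact_mod_cast h)
    have := Nat.le_of_dvd (by norm_num) hdvd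
    have := hp.two_le
    omega
  -- 2^q = 2 in F
  have h2p : (2 : F) ^ p = 2 := by
    calc (2 : F) ^ p = ((1 : F) + 1) ^ p := by norm_num
      _ = 1 ^ p + 1 ^ p := add_pow_char (1 : F) 1 p
      _ = 2 := by norm_num
  have h2q : (2 : F) ^ q = 2 := by
    subst hq
    clear hm hk
    induction k with
    | zero => simp
    | succ i ih => rw [pow_succ, pow_mul, ih, h2p]
  -- frobenius additivity
  have hB : (y + 2 * x) ^ q = y ^ q + 2 * x ^ q := by
    subst hq
    rw [add_pow_char_pow, mul_pow]
    rw [show ((2:F)^(p^k) = 2) from h2q]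
  have hC : (y - 2 * x) ^ q = y ^ q - 2 * x ^ q := by
    subst hq
    rw [sub_pow_char_pow, mul_pow]
    rw [show ((2:F)^(p^k) = 2) from h2q]
  -- q ≥ 3, so m ≥ 2
  have hq3 : 3 ≤ q := by
    have hple : p ≤ p ^ k := Nat.le_self_pow (by omega) p
    have := hp.two_le
    omega
  obtain ⟨n, rfl⟩ : ∃ n, m = n + 2 := ⟨m - 2, by omega⟩
  have hqn : q = 2 * n + 3 := by omega
  subst hqn
  have heq' : y ^ (n + 2) = x ^ (n + 1) * (x ^ 2 + 1) := by
    rw [show n + 2 - 1 = n + 1 from by omega] at heq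
    exact heq
  have hq1 : y ^ (2 * n + 4) = x ^ (2 * n + 2) * (x ^ 2 + 1) ^ 2 := by
    calc y ^ (2 * n + 4) = (y ^ (n + 2)) ^ 2 := by ring
      _ = (x ^ (n + 1) * (x ^ 2 + 1)) ^ 2 := by rw [heq']
      _ = x ^ (2 * n + 2) * (x ^ 2 + 1) ^ 2 := by ring
  -- nonzero denominators
  have hCne : 2 * (y - 2 * x) ≠ 0 := mul_ne_zero h2 hy
  have hCqne : (2 * (y - 2 * x)) ^ (2 * n + 3) ≠ 0 := pow_ne_zero _ hCne
  have hDmne : ((y - 2 * x) ^ (n + 2)) ^ 2 ≠ 0 := pow_ne_zero _ (pow_ne_zero _ hy)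
  rw [show n + 2 - 1 = n + 1 from by omega, show n + 2 + 1 = n + 3 from by omega]
  rw [div_pow, div_pow, div_add_div _ _ hCqne hCne, div_eq_div_iff hDmne (mul_ne_zero hCqne hCne)]
  have hL : (2 * (y - 2 * x)) ^ (2 * n + 3) * (2 * (y - 2 * x)) = 4 * (y - 2 * x) ^ (2 * n + 4) := by
    rw [mul_pow, h2q]
    ring
  have hR : (y + 2 * x) ^ (2 * n + 3) * (2 * (y - 2 * x)) + (2 * (y - 2 * x)) ^ (2 * n + 3) * (y + 2 * x)
      = 4 * (y ^ (2 * n + 4) - 4 * x ^ (2 * n + 4)) := by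
    rw [mul_pow, h2q, hB, hC]
    ring
  rw [hL, hR]
  linear_combination (-4 * ((y - 2 * x) ^ (n + 2)) ^ 2) * hq1
end

section
/- Let n and t be positive integers with t dividing n, and let m̄ ≥ 2 be an integer dividing 3^t + 1 such that 3^n − 1 = (3^t − 1)(m̄ − 1). Then n = t and m̄ = 2. -/
theorem stmt_19 (n t : ℕ) (hn : 0 < n) (ht : 0 < t) (htn : t ∣ n)
    (mbar : ℤ) (hmbar : 2 ≤ mbar) (hdvd : mbar ∣ 3 ^ t + 1)
    (heq : (3 : ℤ) ^ n - 1 = ((3 : ℤ) ^ t - 1) * (mbar - 1)) :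
    n = t ∧ mbar = 2 := by
  have h3t : (1 : ℤ) < 3 ^ t := one_lt_pow₀ (by norm_num) ht.ne'
  have hub : mbar ≤ 3 ^ t + 1 := Int.le_of_dvd (by linarith) hdvd
  -- 3^n < 3^(2t)
  have h1 : (3 : ℤ) ^ n - 1 ≤ (3 ^ t - 1) * (3 ^ t) := by
    calc (3 : ℤ) ^ n - 1 = (3 ^ t - 1) * (mbar - 1) := heq
    _ ≤ (3 ^ t - 1) * (3 ^ t) := by
        apply mul_le_mul_of_nonneg_left (by linarith) (by linarith)
  have h2 : (3 : ℤ) ^ n < 3 ^ (2 * t) := by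
    have : (3 : ℤ) ^ (2 * t) = 3 ^ t * 3 ^ t := by rw [two_mul, pow_add]
    nlinarith
  have hlt : n < 2 * t := by
    exact_mod_cast (pow_lt_pow_iff_right₀ (by norm_num : (1:ℤ) < 3)).mp h2
  have h3 : (3 : ℤ) ^ t - 1 ≤ 3 ^ n - 1 := by
    rw [heq]; nlinarith
  have hle : t ≤ n := by
    have := (pow_le_pow_iff_right₀ (by norm_num : (1:ℤ) < 3)).mp (by linarith : (3:ℤ)^t ≤ 3^n)
    exact_mod_cast this
  obtain ⟨k, rfl⟩ := htn
  have hk : k = 1 := by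
    rcases Nat.lt_or_ge k 2 with h | h
    · interval_cases k
      · omega
      · rfl
    · exfalso; nlinarith [hlt]
  subst hk
  simp only [mul_one] at heq ⊢
  constructor
  · trivial
  · have : (3 : ℤ) ^ t - 1 = (3 ^ t - 1) * (mbar - 1) := heq
    nlinarith
end
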